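/- arXiv:2211.05005 — 2 statements merged into one kernel-verified Lean document; each statement's English description precedes it below -/
import Mathlib

section
/- Let X be a set, let Π : X → L(ℂ^d) be a fixed function taking values in orthogonal projections on ℂ^d, let S be a set of d×d unitary matrices, and let C_Π = {Π_U : U ∈ S} where Π_U(x) = U Π(x) U†. Then for every n ≥ 1 and every ε > 0, γ_{1,∞}(n, ε, C_Π) ≤ N_in(ε/2, S, d_op), where d_op is the distance induced by the operator norm. -/
/-! Writing `U Π U† - V Π V† = (U - V) Π U† + V Π (U - V)†`, unitary invariance of the operator
norm and `‖Π‖ ≤ 1` give `‖U Π(x) U† - V Π(x) V†‖ ≤ 2 ‖U - V‖` for every `x`. Hence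
`U ↦ (x ↦ U Π(x) U†)` sends every internal `ε/2`-net of `S` onto an internal `ε`-net of `C_Π`
for each sample pseudometric, an average of pointwise distances each at most `ε`. -/

open scoped BigOperators ComplexOrder Matrix Classical
open Matrix

/-- Operator (spectral) norm of a matrix (the Schatten `∞`-norm). -/
noncomputable def opNorm {m : Type*} [Fintype m] [DecidableEq m]
    (M : Matrix m m ℂ) : ℝ :=
  ‖Matrix.toEuclideanCLM (𝕜 := ℂ) M‖

/-- An orthogonal projection: Hermitian and idempotent. -/
def IsProjectionMatrix {m : Type*} [Fintype m] [DecidableEq m]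
    (P : Matrix m m ℂ) : Prop :=
  P.IsHermitian ∧ P * P = P

/-- The internal covering number `N_in(ε, B, dist)`: the smallest cardinality of a
finite `A ⊆ B` such that every `b ∈ B` is within pseudodistance `ε` of some
`a ∈ A` (with value `⊤ : ℕ∞` if no finite internal `ε`-net exists). -/
noncomputable def coveringNumber {α : Type*} (ε : ℝ) (B : Set α) (dist : α → α → ℝ) :
    ℕ∞ :=
  ⨅ (A : Finset α) (_ : ↑A ⊆ B ∧ ∀ b ∈ B, ∃ a ∈ A, dist a b ≤ ε), (A.card : ℕ∞)

/-- The operator-class covering number `γ_{1,q}(n, ε, C)`: the supremum over samples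
`x̄ ∈ X^n` of the internal `ε`-covering number of `C` in the pseudometric
`(g₁, g₂) ↦ (1/n) ∑ᵢ ‖g₁(xᵢ) - g₂(xᵢ)‖_q`; the Schatten `q`-norm is passed as the
argument `nrm` (`q = ∞` corresponds to `nrm = opNorm`). -/
noncomputable def gammaCov {X : Type*} {d : ℕ} (n : ℕ) (ε : ℝ)
    (C : Set (X → Matrix (Fin d) (Fin d) ℂ)) (nrm : Matrix (Fin d) (Fin d) ℂ → ℝ) :
    ℕ∞ :=
  ⨆ xbar : Fin n → X,
    coveringNumber ε C (fun g₁ g₂ => (1 / (n : ℝ)) * ∑ i, nrm (g₁ (xbar i) - g₂ (xbar i)))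

theorem coveringNumber_image_le {α β : Type*} {ε δ : ℝ} {B : Set α}
    {distα : α → α → ℝ} {distβ : β → β → ℝ} (f : α → β)
    (hf : ∀ a ∈ B, ∀ b ∈ B, distα a b ≤ ε → distβ (f a) (f b) ≤ δ) :
    coveringNumber δ (f '' B) distβ ≤ coveringNumber ε B distα := by
  refine le_iInf₂ fun A ⟨hAB, hA⟩ => ?_
  have hnet : ↑(A.image f) ⊆ f '' B ∧ ∀ c ∈ f '' B, ∃ a ∈ A.image f, distβ a c ≤ δ := by
    refine ⟨by simpa using Set.image_mono hAB, ?_⟩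
    rintro _ ⟨b, hb, rfl⟩
    obtain ⟨a, ha, hab⟩ := hA b hb
    exact ⟨f a, Finset.mem_image_of_mem f ha, hf a (hAB ha) b hb hab⟩
  calc coveringNumber δ (f '' B) distβ ≤ ((A.image f).card : ℕ∞) := iInf₂_le (A.image f) hnet
    _ ≤ A.card := by exact_mod_cast Finset.card_image_le

theorem one_div_mul_sum_le {n : ℕ} {g : Fin n → ℝ} {c : ℝ} (hc : 0 ≤ c)
    (hg : ∀ i, g i ≤ c) : 1 / (n : ℝ) * ∑ i, g i ≤ c := by
  rw [one_div_mul_eq_div]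
  refine div_le_of_le_mul₀ n.cast_nonneg hc ?_
  simpa [mul_comm] using Finset.sum_le_sum fun i (_ : i ∈ Finset.univ) => hg i

theorem norm_conj_sub_conj_le {E : Type*} [NormedRing E] [StarRing E] [CStarRing E]
    {U V : E} (hU : U ∈ unitary E) (hV : V ∈ unitary E) (A : E) :
    ‖U * A * star U - V * A * star V‖ ≤ 2 * ‖A‖ * ‖U - V‖ := by
  have hsplit : U * A * star U - V * A * star V
      = (U - V) * A * star U + V * (A * star (U - V)) := by
    rw [star_sub]; noncomm_ring
  have hleft : ‖(U - V) * A * star U‖ ≤ ‖A‖ * ‖U - V‖ := by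
    rw [CStarRing.norm_mul_mem_unitary _ (Unitary.star_mem hU), mul_comm ‖A‖]
    exact norm_mul_le _ _
  have hright : ‖V * (A * star (U - V))‖ ≤ ‖A‖ * ‖U - V‖ := by
    rw [CStarRing.norm_mem_unitary_mul _ hV, ← norm_star (U - V)]
    exact norm_mul_le _ _
  calc ‖U * A * star U - V * A * star V‖
      ≤ ‖(U - V) * A * star U‖ + ‖V * (A * star (U - V))‖ := hsplit ▸ norm_add_le _ _
    _ ≤ 2 * ‖A‖ * ‖U - V‖ := by linarith

theorem IsProjectionMatrix.isStarProjection {m : Type*} [Fintype m] [DecidableEq m]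
    {Q : Matrix m m ℂ} (hQ : IsProjectionMatrix Q) : IsStarProjection Q :=
  ⟨hQ.2, hQ.1⟩

section L2Operator

open scoped Matrix.Norms.L2Operator

theorem opNorm_conj_sub_conj_le {m : Type*} [Fintype m] [DecidableEq m]
    {U V Q : Matrix m m ℂ} (hU : U ∈ unitaryGroup m ℂ) (hV : V ∈ unitaryGroup m ℂ)
    (hQ : IsProjectionMatrix Q) :
    opNorm (U * Q * Uᴴ - V * Q * Vᴴ) ≤ 2 * opNorm (U - V) :=
  calc ‖U * Q * star U - V * Q * star V‖ ≤ 2 * ‖Q‖ * ‖U - V‖ := norm_conj_sub_conj_le hU hV Q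
    _ ≤ 2 * 1 * ‖U - V‖ := by gcongr; exact hQ.isStarProjection.norm_le
    _ = 2 * ‖U - V‖ := by rw [mul_one]

end L2Operator

theorem gammaCov_proj_conj_class_le_coveringNumber_general
    {X : Type*} (d : ℕ) (P : X → Matrix (Fin d) (Fin d) ℂ)
    (hP : ∀ x, IsProjectionMatrix (P x))
    (S : Set (Matrix (Fin d) (Fin d) ℂ))
    (hS : ∀ U ∈ S, U ∈ Matrix.unitaryGroup (Fin d) ℂ)
    (n : ℕ) (ε : ℝ) :
    gammaCov n ε {c | ∃ U ∈ S, c = fun x => U * P x * Uᴴ} opNorm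
      ≤ coveringNumber (ε / 2) S (fun U V => opNorm (U - V)) := by
  have hclass :
      {c | ∃ U ∈ S, c = fun x => U * P x * Uᴴ} = (fun U x => U * P x * Uᴴ) '' S := by
    ext c; simp [eq_comm]
  refine iSup_le fun xbar => hclass ▸ coveringNumber_image_le _ fun V hV U hU hVU => ?_
  -- a pair at distance `≤ ε / 2` forces `0 ≤ ε`, which settles the empty sample `n = 0`
  have hnorm : 0 ≤ opNorm (V - U) := norm_nonneg _
  have hε : 0 ≤ ε := by linarith
  refine one_div_mul_sum_le hε fun i => ?_
  calc opNorm (V * P (xbar i) * Vᴴ - U * P (xbar i) * Uᴴ)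
      ≤ 2 * opNorm (V - U) := opNorm_conj_sub_conj_le (hS V hV) (hS U hU) (hP (xbar i))
    _ ≤ ε := by linarith

/-- For a fixed projector-valued function `Π : X → L(ℂ^d)` and a set `S` of `d × d`
unitaries, the concept class `C_Π = {x ↦ U Π(x) Uᴴ : U ∈ S}` satisfies
`γ_{1,∞}(n, ε, C_Π) ≤ N_in(ε/2, S, d_op)` for all `n ≥ 1` and `ε > 0`. -/
theorem gammaCov_proj_conj_class_le_coveringNumber
    {X : Type*} (d : ℕ) (P : X → Matrix (Fin d) (Fin d) ℂ)
    (hP : ∀ x, IsProjectionMatrix (P x))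
    (S : Set (Matrix (Fin d) (Fin d) ℂ))
    (hS : ∀ U ∈ S, U ∈ Matrix.unitaryGroup (Fin d) ℂ)
    (n : ℕ) (hn : 1 ≤ n) (ε : ℝ) (hε : 0 < ε) :
    gammaCov n ε {c | ∃ U ∈ S, c = fun x => U * P x * Uᴴ} opNorm
      ≤ coveringNumber (ε / 2) S (fun U V => opNorm (U - V)) :=
  gammaCov_proj_conj_class_le_coveringNumber_general d P hP S hS n ε
end

section
/- Let σ_1,…,σ_m and ρ be d×d density matrices, and for each pair i < j let A_{ij} be the orthogonal projection onto the span of the eigenspaces of σ_i − σ_j with positive eigenvalues, so that Tr(σ_i A_{ij}) − Tr(σ_j A_{ij}) = d_tr(σ_i, σ_j). Set η = min_{1 ≤ k ≤ m} d_tr(σ_k, ρ). Suppose real numbers μ_{ij} (i < j) satisfy |Tr(ρ A_{ij}) − μ_{ij}| ≤ ε for all i < j, and let k* be any minimizer over k ∈ {1,…,m} of Δ_k := max_{i<j} |Tr(σ_k A_{ij}) − μ_{ij}|. Then d_tr(σ_{k*}, ρ) ≤ 3η + 2ε. -/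
open scoped BigOperators ComplexOrder Matrix Classical
open Matrix

section MatrixDefs

variable {m : Type*} [Fintype m] [DecidableEq m]

/-- Square root of a positive semidefinite matrix (junk value `0` otherwise). -/
noncomputable def matSqrt (A : Matrix m m ℂ) : Matrix m m ℂ :=
  if h : A.PosSemidef then
    (h.1.eigenvectorUnitary : Matrix m m ℂ) *
      Matrix.diagonal (fun i => ((Real.sqrt (h.1.eigenvalues i) : ℝ) : ℂ)) *
      (star h.1.eigenvectorUnitary : Matrix m m ℂ)
  else 0

/-- Trace norm `‖M‖₁ = Tr √(Mᴴ M)`. -/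
noncomputable def traceNorm (M : Matrix m m ℂ) : ℝ :=
  (matSqrt (Mᴴ * M)).trace.re

/-- Trace distance `d_tr(ρ,σ) = (1/2)‖ρ - σ‖₁`. -/
noncomputable def trDist (ρ σ : Matrix m m ℂ) : ℝ :=
  (1 / 2) * traceNorm (ρ - σ)

/-- A density matrix: positive semidefinite with unit trace. -/
def IsDensityMatrix (ρ : Matrix m m ℂ) : Prop :=
  ρ.PosSemidef ∧ ρ.trace = 1

end MatrixDefs

/-- For a Hermitian matrix `M`, the orthogonal projection onto the span of its
eigenspaces with positive eigenvalues — the Helstrom projector of `M` (junk value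
`0` if `M` is not Hermitian). -/
noncomputable def posPartProj {d : ℕ} (M : Matrix (Fin d) (Fin d) ℂ) :
    Matrix (Fin d) (Fin d) ℂ :=
  if hM : M.IsHermitian then
    (hM.eigenvectorUnitary : Matrix (Fin d) (Fin d) ℂ) *
      Matrix.diagonal (fun i => if 0 < hM.eigenvalues i then (1 : ℂ) else 0) *
      (star hM.eigenvectorUnitary : Matrix (Fin d) (Fin d) ℂ)
  else 0

/-!
Every effect `0 ≤ A ≤ 1` satisfies `|Tr(XA) - Tr(YA)| ≤ d_tr(X, Y)` for density matrices
`X, Y`, with equality for the Helstrom projector of `X - Y`: in an eigenbasis of the traceless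
Hermitian matrix `X - Y` with eigenvalues `λᵢ` this is `|∑ λᵢ aᵢ| ≤ ½ ∑ |λᵢ|` for `aᵢ ∈ [0, 1]`.
Consequently `Δ_k ≤ d_tr(σ_k, ρ) + ε` for every `k`, so `Δ_{k*} ≤ Δ_{k₀} ≤ η + ε` for a closest
hypothesis `σ_{k₀}`. Testing the pair `{k*, k₀}` against its own Helstrom projector gives
`d_tr(σ_{k*}, σ_{k₀}) ≤ Δ_{k*} + Δ_{k₀} ≤ 2η + 2ε`, and the triangle inequality concludes.
-/

open scoped MatrixOrder

lemma abs_sum_mul_le_half_sum_abs {ι : Type*} (s : Finset ι) {x a : ι → ℝ}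
    (hx : ∑ i ∈ s, x i = 0) (ha : ∀ i ∈ s, a i ∈ Set.Icc 0 1) :
    |∑ i ∈ s, x i * a i| ≤ 1 / 2 * ∑ i ∈ s, |x i| := by
  have hterm : ∀ i ∈ s, |x i * a i - x i / 2| ≤ |x i| / 2 := by
    intro i hi
    obtain ⟨ha0, ha1⟩ := ha i hi
    rw [show x i * a i - x i / 2 = x i * (a i - 1 / 2) by ring, abs_mul]
    have : |a i - 1 / 2| ≤ 1 / 2 := abs_le.mpr ⟨by linarith, by linarith⟩
    nlinarith [abs_nonneg (x i)]
  calc |∑ i ∈ s, x i * a i| = |∑ i ∈ s, (x i * a i - x i / 2)| := by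
        rw [Finset.sum_sub_distrib, ← Finset.sum_div, hx]; simp
    _ ≤ ∑ i ∈ s, |x i| / 2 := (Finset.abs_sum_le_sum_abs _ _).trans (Finset.sum_le_sum hterm)
    _ = 1 / 2 * ∑ i ∈ s, |x i| := by rw [← Finset.sum_div]; ring

lemma sum_mul_ite_pos_eq_half_sum_abs {ι : Type*} (s : Finset ι) {x : ι → ℝ}
    (hx : ∑ i ∈ s, x i = 0) :
    ∑ i ∈ s, x i * (if 0 < x i then 1 else 0) = 1 / 2 * ∑ i ∈ s, |x i| := by
  have hterm : ∀ i ∈ s, x i * (if 0 < x i then 1 else 0) = (|x i| + x i) / 2 := by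
    intro i _
    split_ifs with h
    · rw [abs_of_pos h]; ring
    · rw [abs_of_nonpos (not_lt.mp h)]; ring
  rw [Finset.sum_congr rfl hterm, ← Finset.sum_div, Finset.sum_add_distrib, hx]
  ring

section Spectral

variable {n : Type*} [Fintype n] [DecidableEq n] {M A : Matrix n n ℂ}

lemma matSqrt_eq_sqrt (hA : A.PosSemidef) : matSqrt A = CFC.sqrt A := by
  rw [CFC.sqrt_eq_real_sqrt A hA.nonneg, cfcₙ_eq_cfc, hA.1.cfc_eq, IsHermitian.cfc,
    Unitary.conjStarAlgAut_apply, matSqrt, dif_pos hA]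
  rfl

lemma Matrix.PosSemidef.re_star_mul_mul_apply_mem_Icc (hA : A.PosSemidef)
    (hA' : (1 - A).PosSemidef) (U : unitaryGroup n ℂ) (i : n) :
    ((star (U : Matrix n n ℂ) * A * U) i i).re ∈ Set.Icc 0 1 := by
  have h0 := (hA.conjTranspose_mul_mul_same (U : Matrix n n ℂ)).diag_nonneg (i := i)
  have h1 := (hA'.conjTranspose_mul_mul_same (U : Matrix n n ℂ)).diag_nonneg (i := i)
  rw [← star_eq_conjTranspose] at h0
  rw [mul_sub, sub_mul, mul_one, ← star_eq_conjTranspose, Unitary.coe_star_mul_self] at h1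
  refine ⟨(Complex.nonneg_iff.mp h0).1, ?_⟩
  have := (Complex.nonneg_iff.mp h1).1
  simp only [sub_apply, one_apply_eq, Complex.sub_re, Complex.one_re] at this
  linarith

namespace Matrix.IsHermitian

lemma trace_cfc (hM : M.IsHermitian) (f : ℝ → ℝ) :
    (cfc f M).trace = ∑ i, (f (hM.eigenvalues i) : ℂ) := by
  rw [hM.cfc_eq, IsHermitian.cfc, Unitary.conjStarAlgAut_apply, trace_mul_cycle,
    Unitary.coe_star_mul_self, one_mul, trace_diagonal]
  rfl

lemma re_trace_mul_eq_sum (hM : M.IsHermitian) (A : Matrix n n ℂ) :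
    (M * A).trace.re = ∑ i, hM.eigenvalues i *
      ((star (hM.eigenvectorUnitary : Matrix n n ℂ) * A * hM.eigenvectorUnitary) i i).re := by
  conv_lhs => rw [hM.spectral_theorem, Unitary.conjStarAlgAut_apply]
  rw [mul_assoc, trace_mul_comm, ← mul_assoc, trace_mul_comm, ← mul_assoc, mul_assoc]
  simp [trace, diagonal_mul, Complex.re_sum]

lemma traceNorm_eq_sum_abs (hM : M.IsHermitian) : traceNorm M = ∑ i, |hM.eigenvalues i| := by
  rw [traceNorm, matSqrt_eq_sqrt (posSemidef_conjTranspose_mul_self M), ← star_eq_conjTranspose,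
    ← CFC.abs, CFC.abs_eq_cfc_norm M hM, hM.trace_cfc]
  simp [Complex.re_sum]

lemma sum_eigenvalues_eq_zero (hM : M.IsHermitian) (h : M.trace = 0) :
    ∑ i, hM.eigenvalues i = 0 := by
  simpa [Complex.re_sum] using congrArg Complex.re (hM.trace_eq_sum_eigenvalues.symm.trans h)

lemma abs_re_trace_mul_le (hM : M.IsHermitian) (h : M.trace = 0)
    (hA : A.PosSemidef) (hA' : (1 - A).PosSemidef) :
    |(M * A).trace.re| ≤ 1 / 2 * traceNorm M := by
  rw [hM.re_trace_mul_eq_sum, hM.traceNorm_eq_sum_abs]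
  exact abs_sum_mul_le_half_sum_abs _ (hM.sum_eigenvalues_eq_zero h)
    fun i _ => hA.re_star_mul_mul_apply_mem_Icc hA' _ i

end Matrix.IsHermitian

end Spectral

section PosPartProj

variable {d : ℕ} {M : Matrix (Fin d) (Fin d) ℂ}

lemma posPartProj_eq_cfc (hM : M.IsHermitian) :
    posPartProj M = cfc (fun x : ℝ => if 0 < x then 1 else 0) M := by
  rw [hM.cfc_eq, IsHermitian.cfc, Unitary.conjStarAlgAut_apply, posPartProj, dif_pos hM]
  congr
  ext i
  split_ifs with h <;> simp [h]

lemma posPartProj_posSemidef (hM : M.IsHermitian) : (posPartProj M).PosSemidef := by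
  rw [posPartProj_eq_cfc hM, ← nonneg_iff_posSemidef]
  exact cfc_nonneg fun x _ => by split_ifs <;> norm_num

lemma one_sub_posPartProj_posSemidef (hM : M.IsHermitian) : (1 - posPartProj M).PosSemidef := by
  rw [posPartProj_eq_cfc hM, ← le_iff]
  exact cfc_le_one _ _ fun x _ => by split_ifs <;> norm_num

lemma Matrix.IsHermitian.re_trace_mul_posPartProj (hM : M.IsHermitian) (h : M.trace = 0) :
    (M * posPartProj M).trace.re = 1 / 2 * traceNorm M := by
  have hcont := (finite_real_spectrum (A := M)).continuousOn (Y := ℝ)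
  rw [posPartProj_eq_cfc hM]
  nth_rw 1 [← cfc_id' ℝ M]
  rw [← cfc_mul _ _ M (hcont _) (hcont _), hM.trace_cfc, hM.traceNorm_eq_sum_abs,
    ← sum_mul_ite_pos_eq_half_sum_abs _ (hM.sum_eigenvalues_eq_zero h)]
  simp [Complex.re_sum]

end PosPartProj

lemma trDist_comm {n : Type*} [Fintype n] [DecidableEq n] (X Y : Matrix n n ℂ) :
    trDist X Y = trDist Y X := by
  rw [trDist, trDist, traceNorm, traceNorm, ← neg_sub, conjTranspose_neg, neg_mul_neg]

namespace IsDensityMatrix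

section General

variable {n : Type*} [Fintype n] {X Y : Matrix n n ℂ}

lemma isHermitian_sub (hX : IsDensityMatrix X) (hY : IsDensityMatrix Y) : (X - Y).IsHermitian :=
  hX.1.1.sub hY.1.1

lemma trace_sub_eq_zero (hX : IsDensityMatrix X) (hY : IsDensityMatrix Y) :
    (X - Y).trace = 0 := by
  rw [trace_sub, hX.2, hY.2, sub_self]

variable [DecidableEq n]

lemma trDist_nonneg (hX : IsDensityMatrix X) (hY : IsDensityMatrix Y) : 0 ≤ trDist X Y := by
  rw [trDist, (hX.isHermitian_sub hY).traceNorm_eq_sum_abs]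
  positivity

lemma abs_sub_le_trDist (hX : IsDensityMatrix X) (hY : IsDensityMatrix Y)
    {A : Matrix n n ℂ} (hA : A.PosSemidef) (hA' : (1 - A).PosSemidef) :
    |(X * A).trace.re - (Y * A).trace.re| ≤ trDist X Y := by
  rw [trDist]
  simpa [sub_mul] using (hX.isHermitian_sub hY).abs_re_trace_mul_le
    (hX.trace_sub_eq_zero hY) hA hA'

lemma abs_re_trace_mul_sub_le (hX : IsDensityMatrix X) (hY : IsDensityMatrix Y)
    {A : Matrix n n ℂ} (hA : A.PosSemidef) (hA' : (1 - A).PosSemidef) (c : ℝ) :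
    |(X * A).trace.re - c| ≤ trDist X Y + |(Y * A).trace.re - c| :=
  (abs_sub_le _ _ _).trans (by gcongr; exact hX.abs_sub_le_trDist hY hA hA')

end General

variable {d : ℕ} {X Y Z : Matrix (Fin d) (Fin d) ℂ}

lemma trDist_eq_helstrom (hX : IsDensityMatrix X) (hY : IsDensityMatrix Y) :
    trDist X Y = (X * posPartProj (X - Y)).trace.re - (Y * posPartProj (X - Y)).trace.re := by
  rw [trDist, ← (hX.isHermitian_sub hY).re_trace_mul_posPartProj (hX.trace_sub_eq_zero hY),
    sub_mul, trace_sub, Complex.sub_re]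

lemma trDist_self (hX : IsDensityMatrix X) : trDist X X = 0 := by
  simpa using hX.trDist_eq_helstrom hX

lemma trDist_triangle (hX : IsDensityMatrix X) (hY : IsDensityMatrix Y)
    (hZ : IsDensityMatrix Z) : trDist X Z ≤ trDist X Y + trDist Y Z := by
  have hP := posPartProj_posSemidef (hX.isHermitian_sub hZ)
  have hP' := one_sub_posPartProj_posSemidef (hX.isHermitian_sub hZ)
  have hXY := (abs_le.mp (hX.abs_sub_le_trDist hY hP hP')).2
  have hYZ := (abs_le.mp (hY.abs_sub_le_trDist hZ hP hP')).2
  rw [hX.trDist_eq_helstrom hZ]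
  linarith

lemma trDist_le_add_of_abs_sub_le (hX : IsDensityMatrix X) (hY : IsDensityMatrix Y)
    {μ a b : ℝ} (ha : |(X * posPartProj (X - Y)).trace.re - μ| ≤ a)
    (hb : |(Y * posPartProj (X - Y)).trace.re - μ| ≤ b) : trDist X Y ≤ a + b := by
  rw [hX.trDist_eq_helstrom hY]
  linarith [(abs_le.mp ha).2, (abs_le.mp hb).1]

end IsDensityMatrix

/-- **Quantum hypothesis selection via Helstrom projectors.**  Let `σ₁,…,σ_m` and
`ρ` be `d × d` density matrices and, for each pair `i < j`, let
`A_{ij} = posPartProj (σᵢ - σⱼ)` (so `Tr(σᵢ A_{ij}) - Tr(σⱼ A_{ij}) = d_tr(σᵢ,σⱼ)`).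
Set `η = min_k d_tr(σ_k, ρ)`.  If real numbers `μ_{ij}` satisfy
`|Tr(ρ A_{ij}) - μ_{ij}| ≤ ε` for all `i < j`, and `k*` minimizes
`Δ_k = max_{i<j} |Tr(σ_k A_{ij}) - μ_{ij}|`, then `d_tr(σ_{k*}, ρ) ≤ 3η + 2ε`. -/
theorem hypothesis_selection (d m : ℕ)
    (σ : Fin m → Matrix (Fin d) (Fin d) ℂ) (ρ : Matrix (Fin d) (Fin d) ℂ)
    (hσ : ∀ k, IsDensityMatrix (σ k)) (hρ : IsDensityMatrix ρ)
    (μ : Fin m → Fin m → ℝ) (ε η : ℝ) (hε : 0 ≤ ε)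
    (hμ : ∀ i j : Fin m, i < j →
      |((ρ * posPartProj (σ i - σ j)).trace).re - μ i j| ≤ ε)
    (hη : IsLeast {r : ℝ | ∃ k : Fin m, r = trDist (σ k) ρ} η)
    (Δ : Fin m → ℝ)
    (hΔ : ∀ k, Δ k = sSup {r : ℝ | ∃ i j : Fin m, i < j ∧
      r = |((σ k * posPartProj (σ i - σ j)).trace).re - μ i j|})
    (kstar : Fin m) (hkstar : ∀ k, Δ kstar ≤ Δ k) :
    trDist (σ kstar) ρ ≤ 3 * η + 2 * ε := by
  obtain ⟨k₀, rfl⟩ := hη.1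
  have hbound : ∀ k i j, i < j →
      |((σ k * posPartProj (σ i - σ j)).trace).re - μ i j| ≤ trDist (σ k) ρ + ε := by
    intro k i j hij
    have hij' := (hσ i).isHermitian_sub (hσ j)
    exact ((hσ k).abs_re_trace_mul_sub_le hρ (posPartProj_posSemidef hij')
      (one_sub_posPartProj_posSemidef hij') _).trans (by gcongr; exact hμ i j hij)
  have hle_Δ : ∀ k i j, i < j →
      |((σ k * posPartProj (σ i - σ j)).trace).re - μ i j| ≤ Δ k := fun k i j hij => by
    rw [hΔ k]
    refine le_csSup ⟨trDist (σ k) ρ + ε, ?_⟩ ⟨i, j, hij, rfl⟩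
    rintro r ⟨i', j', hij', rfl⟩
    exact hbound k i' j' hij'
  have hΔ_le : ∀ k, Δ k ≤ trDist (σ k) ρ + ε := fun k => by
    rw [hΔ k]
    refine Real.sSup_le ?_ (by linarith [(hσ k).trDist_nonneg hρ])
    rintro r ⟨i, j, hij, rfl⟩
    exact hbound k i j hij
  have hpair : ∀ i j, i < j → trDist (σ i) (σ j) ≤ Δ i + Δ j := fun i j hij =>
    (hσ i).trDist_le_add_of_abs_sub_le (hσ j) (hle_Δ i i j hij) (hle_Δ j i j hij)
  have hΔstar : Δ kstar ≤ trDist (σ k₀) ρ + ε := (hkstar k₀).trans (hΔ_le k₀)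
  have hstar₀ : trDist (σ kstar) (σ k₀) ≤ 2 * (trDist (σ k₀) ρ + ε) := by
    rcases lt_trichotomy kstar k₀ with h | rfl | h
    · linarith [hpair _ _ h, hΔ_le k₀]
    · linarith [(hσ kstar).trDist_self, (hσ kstar).trDist_nonneg hρ]
    · linarith [trDist_comm (σ kstar) (σ k₀), hpair _ _ h, hΔ_le k₀]
  linarith [(hσ kstar).trDist_triangle (hσ k₀) hρ]
end
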